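/- For a bimodal switched system with diagonalizable Schur stable matrices $A_1 = V_1 D_1 V_1^{-1}$, $A_2 = V_2 D_2 V_2^{-1}$ with spectral radii $\rho_1, \rho_2 < 1$: if $\tau > \frac{\ln \rho(|V_2^{-1}V_1| \, |V_1^{-1}V_2|)}{-\ln(\rho_1 \rho_2)}$, then the switched system $x(t+1) = A_{\sigma(t)}x(t)$ is asymptotically stable for all switching signals with dwell times $t_k - t_{k-1} \ge \tau$. -/

import Mathlib

/-!
Work in the eigen-coordinates `q = V₀⁻¹ z` of the mode that starts a period. One period (mode `0`
for `p ≥ τ` steps, then mode `1` for `q ≥ τ` steps) acts on them as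
`(V₀⁻¹ V₁) D₁^q (V₁⁻¹ V₀) D₀^p`, so entrywise
`|q'| ≤ ρ₁^q ρ₀^p |V₀⁻¹ V₁| |V₁⁻¹ V₀| |q| ≤ (ρ₀ ρ₁)^τ P |q|` with `P ≥ 0`. Iterating gives
`‖q_j‖ ≤ ((ρ₀ ρ₁)^τ)^j ‖P^j‖ ‖q_0‖`, and Gelfand's formula bounds `‖P^j‖ ≤ r^j` for every
`r > ρ(P)`; the dwell-time hypothesis says precisely that `(ρ₀ ρ₁)^τ ρ(P) < 1`, and `ρ(P)` does not
depend on which mode starts since `ρ(XY) = ρ(YX)`. Inside a period the powers `V D^p V⁻¹` are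
uniformly bounded, so decay at the period boundaries gives decay of the whole solution.
-/

/-- The entrywise absolute value of a complex matrix, viewed again as a complex matrix. -/
noncomputable def absMatrix {n : Type*} (A : Matrix n n ℂ) : Matrix n n ℂ :=
  Matrix.of fun i j => ((‖A i j‖ : ℝ) : ℂ)

open Filter Matrix Topology

section Entrywise

variable {m n : Type*} [Fintype n]

theorem Matrix.mulVec_mono_of_nonneg {R : Type*} [Semiring R] [PartialOrder R] [IsOrderedRing R]
    {M : Matrix m n R} (hM : ∀ i j, 0 ≤ M i j) {v w : n → R} (hvw : v ≤ w) :
    M *ᵥ v ≤ M *ᵥ w := fun i =>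
  dotProduct_le_dotProduct_of_nonneg_left hvw (hM i)

theorem Matrix.mulVec_nonneg_of_nonneg {R : Type*} [Semiring R] [PartialOrder R] [IsOrderedRing R]
    {M : Matrix m n R} (hM : ∀ i j, 0 ≤ M i j) {v : n → R} (hv : 0 ≤ v) : 0 ≤ M *ᵥ v := fun i =>
  dotProduct_nonneg_of_nonneg (hM i) hv

theorem Matrix.norm_mulVec_le_map_norm_mulVec {𝕜 : Type*} [NormedRing 𝕜] (M : Matrix m n 𝕜)
    (v : n → 𝕜) : (‖(M *ᵥ v) ·‖) ≤ M.map (‖·‖) *ᵥ (‖v ·‖) := fun _ =>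
  (norm_sum_le _ _).trans (Finset.sum_le_sum fun _ _ => norm_mul_le _ _)

theorem Pi.norm_le_norm_of_nonneg_of_le {v w : n → ℝ} (hv : 0 ≤ v) (hvw : v ≤ w) :
    ‖v‖ ≤ ‖w‖ :=
  (pi_norm_le_iff_of_nonneg (norm_nonneg w)).2 fun i => by
    rw [Real.norm_of_nonneg (hv i)]
    exact (hvw i).trans ((le_abs_self _).trans (norm_le_pi_norm w i))

theorem Pi.norm_norm_apply {E : Type*} [SeminormedAddCommGroup E] (v : n → E) :
    ‖(‖v ·‖)‖ = ‖v‖ := by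
  simp [Pi.norm_def]

theorem absMatrix_mul_absMatrix (X Y : Matrix n n ℂ) :
    absMatrix X * absMatrix Y = (X.map (‖·‖) * Y.map (‖·‖)).map ((↑) : ℝ → ℂ) :=
  (Matrix.map_mul (f := Complex.ofRealHom)).symm

theorem Matrix.le_pow_smul_pow_mulVec [DecidableEq n] {R : Type*} [CommSemiring R] [PartialOrder R]
    [IsOrderedRing R] {P : Matrix n n R} (hP : ∀ i j, 0 ≤ P i j) {c : R} (hc : 0 ≤ c)
    {a : ℕ → n → R} (ha : ∀ j, a (j + 1) ≤ c • (P *ᵥ a j)) (j : ℕ) :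
    a j ≤ c ^ j • (P ^ j *ᵥ a 0) := by
  induction j with
  | zero => simp
  | succ j ih =>
    calc a (j + 1) ≤ c • (P *ᵥ a j) := ha j
      _ ≤ c • (P *ᵥ (c ^ j • (P ^ j *ᵥ a 0))) :=
        smul_le_smul_of_nonneg_left (mulVec_mono_of_nonneg hP ih) hc
      _ = c ^ (j + 1) • (P ^ (j + 1) *ᵥ a 0) := by
        rw [mulVec_smul, mulVec_mulVec, smul_smul, ← pow_succ', ← pow_succ']

end Entrywise

section Diagonal

variable {n 𝕜 : Type*} [Fintype n] [DecidableEq n] [NormedField 𝕜]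

theorem norm_diagonal_pow_mulVec_le {d : n → 𝕜} {ρ : ℝ} (hd : ∀ i, ‖d i‖ ≤ ρ) (p : ℕ)
    (v : n → 𝕜) : (‖(diagonal d ^ p *ᵥ v) ·‖) ≤ ρ ^ p • (‖v ·‖) := fun i => by
  simp only [Pi.smul_apply, smul_eq_mul]
  rw [diagonal_pow, mulVec_diagonal, Pi.pow_apply, norm_mul, norm_pow]
  exact mul_le_mul_of_nonneg_right (pow_le_pow_left₀ (norm_nonneg _) (hd i) p) (norm_nonneg _)

theorem norm_mul_diagonal_pow_mulVec_le (X : Matrix n n 𝕜) {d : n → 𝕜} {ρ : ℝ}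
    (hd : ∀ i, ‖d i‖ ≤ ρ) (p : ℕ) (v : n → 𝕜) :
    (‖((X * diagonal d ^ p) *ᵥ v) ·‖) ≤ ρ ^ p • (X.map (‖·‖) *ᵥ (‖v ·‖)) := by
  rw [← mulVec_mulVec, ← mulVec_smul]
  exact (X.norm_mulVec_le_map_norm_mulVec _).trans
    (mulVec_mono_of_nonneg (fun i j => norm_nonneg (X i j)) (norm_diagonal_pow_mulVec_le hd p v))

theorem norm_inv_mulVec_two_mode_le (V₀ V₁ : Matrix n n 𝕜)
    {d₀ d₁ : n → 𝕜} {ρ₀ ρ₁ : ℝ} (hρ₁ : 0 ≤ ρ₁) (hd₀ : ∀ i, ‖d₀ i‖ ≤ ρ₀)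
    (hd₁ : ∀ i, ‖d₁ i‖ ≤ ρ₁) (p q : ℕ) (y : n → 𝕜) :
    (‖(V₀⁻¹ *ᵥ ((V₁ * diagonal d₁ ^ q * V₁⁻¹) *ᵥ ((V₀ * diagonal d₀ ^ p * V₀⁻¹) *ᵥ y))) ·‖) ≤
      (ρ₁ ^ q * ρ₀ ^ p) •
        (((V₀⁻¹ * V₁).map (‖·‖) * (V₁⁻¹ * V₀).map (‖·‖)) *ᵥ (‖(V₀⁻¹ *ᵥ y) ·‖)) := by
  set X₁ := V₀⁻¹ * V₁
  set X₀ := V₁⁻¹ * V₀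
  set u := V₀⁻¹ *ᵥ y
  calc (‖(V₀⁻¹ *ᵥ ((V₁ * diagonal d₁ ^ q * V₁⁻¹) *ᵥ ((V₀ * diagonal d₀ ^ p * V₀⁻¹) *ᵥ y))) ·‖)
      = (‖((X₁ * diagonal d₁ ^ q) *ᵥ ((X₀ * diagonal d₀ ^ p) *ᵥ u)) ·‖) := by
        simp only [X₁, X₀, u, mulVec_mulVec, Matrix.mul_assoc]
    _ ≤ ρ₁ ^ q • (X₁.map (‖·‖) *ᵥ (‖((X₀ * diagonal d₀ ^ p) *ᵥ u) ·‖)) :=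
        norm_mul_diagonal_pow_mulVec_le X₁ hd₁ q _
    _ ≤ ρ₁ ^ q • (X₁.map (‖·‖) *ᵥ (ρ₀ ^ p • (X₀.map (‖·‖) *ᵥ (‖u ·‖)))) :=
        smul_le_smul_of_nonneg_left (mulVec_mono_of_nonneg (fun i j => norm_nonneg (X₁ i j))
          (norm_mul_diagonal_pow_mulVec_le X₀ hd₀ p u)) (pow_nonneg hρ₁ q)
    _ = (ρ₁ ^ q * ρ₀ ^ p) • ((X₁.map (‖·‖) * X₀.map (‖·‖)) *ᵥ (‖u ·‖)) := by
        rw [mulVec_smul, mulVec_mulVec, smul_smul]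

end Diagonal

section SpectralRadius

variable {𝕜 A : Type*} [NormedField 𝕜] [Ring A] [Algebra 𝕜 A]

theorem spectralRadius_mul_comm (a b : A) :
    spectralRadius 𝕜 (a * b) = spectralRadius 𝕜 (b * a) := by
  suffices h : ∀ a b : A, spectralRadius 𝕜 (a * b) ≤ spectralRadius 𝕜 (b * a) from
    (h a b).antisymm (h b a)
  intro a b
  refine iSup₂_le fun k hk => ?_
  rcases eq_or_ne k 0 with rfl | hk0
  · simp
  · have : k ∈ spectrum 𝕜 (b * a) \ {0} := spectrum.nonzero_mul_comm (𝕜 := 𝕜) a b ▸ ⟨hk, hk0⟩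
    exact le_iSup₂ (f := fun k (_ : k ∈ spectrum 𝕜 (b * a)) => (‖k‖₊ : ENNReal)) k this.1

end SpectralRadius

theorem eventually_norm_pow_le_of_spectralRadius_lt {A : Type*} [NormedRing A] [NormedAlgebra ℂ A]
    [CompleteSpace A] (a : A) {r : ℝ} (hr : (spectralRadius ℂ a).toReal < r) : ∀ᶠ n : ℕ in atTop, ‖a ^ n‖ ≤ r ^ n := by
  have hr0 : 0 < r := ENNReal.toReal_nonneg.trans_lt hr
  have hfin : spectralRadius ℂ a ≠ ⊤ :=
    ne_top_of_le_ne_top (by finiteness) (spectrum.spectralRadius_le_pow_nnnorm_pow_one_div ℂ a 0)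
  have hlt : spectralRadius ℂ a < ENNReal.ofReal r := (ENNReal.lt_ofReal_iff_toReal_lt hfin).2 hr
  filter_upwards [(spectrum.pow_norm_pow_one_div_tendsto_nhds_spectralRadius a).eventually_lt_const
    hlt, eventually_ne_atTop 0] with n hn hn0
  rw [ENNReal.ofReal_lt_ofReal_iff hr0] at hn
  calc ‖a ^ n‖ = (‖a ^ n‖ ^ (1 / n : ℝ)) ^ n := by
        rw [one_div, Real.rpow_inv_natCast_pow (norm_nonneg _) hn0]
    _ ≤ r ^ n := pow_le_pow_left₀ (by positivity) hn.le n

theorem Real.pow_mul_pow_le_mul_rpow {a b τ : ℝ} (ha₀ : 0 < a) (ha₁ : a ≤ 1) (hb₀ : 0 < b)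
    (hb₁ : b ≤ 1) {p q : ℕ} (hp : τ ≤ p) (hq : τ ≤ q) : b ^ q * a ^ p ≤ (a * b) ^ τ := by
  have key : ∀ {x : ℝ} {m : ℕ}, 0 < x → x ≤ 1 → τ ≤ m → x ^ m ≤ x ^ τ := fun hx₀ hx₁ hm => by
    rw [← Real.rpow_natCast]
    exact Real.rpow_le_rpow_of_exponent_ge hx₀ hx₁ hm
  rw [Real.mul_rpow ha₀.le hb₀.le, mul_comm (a ^ τ)]
  exact mul_le_mul (key hb₀ hb₁ hq) (key ha₀ ha₁ hp) (pow_nonneg ha₀.le p)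
    (Real.rpow_nonneg hb₀.le τ)

theorem Real.rpow_mul_lt_one_of_log_div_lt {β γ τ : ℝ} (hβ : 0 ≤ β) (hγ₀ : 0 < γ) (hγ₁ : γ < 1)
    (h : Real.log β / -Real.log γ < τ) : γ ^ τ * β < 1 := by
  rcases hβ.eq_or_lt with rfl | hβ
  · simp
  have hlog : Real.log β + Real.log γ * τ < 0 := by
    have := (div_lt_iff₀ (neg_pos.2 (Real.log_neg hγ₀ hγ₁))).1 h
    linarith
  calc γ ^ τ * β = Real.exp (Real.log β + Real.log γ * τ) := by
        rw [Real.exp_add, Real.exp_log hβ, Real.rpow_def_of_pos hγ₀, mul_comm]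
    _ < 1 := Real.exp_lt_one_iff.2 hlog

theorem Fin.two_eq_of_forall_ne_succ {b : ℕ → Fin 2} (hb : ∀ k, b k ≠ b (k + 1)) (j i : ℕ) :
    b (2 * j + i) = b i := by
  induction j with
  | zero => simp
  | succ j ih =>
    have h₁ := hb (2 * j + i)
    have h₂ := hb (2 * j + i + 1)
    rw [← ih, show 2 * (j + 1) + i = 2 * j + i + 1 + 1 by ring]
    omega

theorem Matrix.eq_pow_mulVec_of_forall_step {n R : Type*} [Fintype n] [DecidableEq n] [Semiring R]
    {M : Matrix n n R} {y : ℕ → n → R} {a : ℕ} (p : ℕ)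
    (h : ∀ u, a ≤ u → u < a + p → y (u + 1) = M *ᵥ y u) : y (a + p) = M ^ p *ᵥ y a := by
  induction p with
  | zero => simp
  | succ p ih =>
    rw [← add_assoc, h _ (by omega) (by omega), ih fun u hu₁ hu₂ => h u hu₁ (by omega),
      mulVec_mulVec, pow_succ']

theorem Matrix.conj_pow {n R : Type*} [Fintype n] [DecidableEq n] [CommRing R] {V : Matrix n n R}
    (hV : IsUnit V) (X : Matrix n n R) (p : ℕ) : (V * X * V⁻¹) ^ p = V * X ^ p * V⁻¹ := by
  simpa only [coe_units_inv, hV.unit_spec] using Units.conj_pow hV.unit X p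

theorem StrictMono.exists_le_lt_succ {t : ℕ → ℕ} (ht : StrictMono t) {K u : ℕ} (hu : t K ≤ u) :
    ∃ k, K ≤ k ∧ t k ≤ u ∧ u < t (k + 1) := by
  have hex : ∃ k, u < t (k + 1) := ⟨u, (Nat.lt_succ_self u).trans_le (ht.id_le _)⟩
  have hK : K ≤ Nat.find hex := by
    by_contra! h
    exact (Nat.find_spec hex).not_ge ((ht.monotone (Nat.succ_le_of_lt h)).trans hu)
  refine ⟨Nat.find hex, hK, ?_, Nat.find_spec hex⟩
  cases h : Nat.find hex with
  | zero => exact (ht.monotone K.zero_le).trans hu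
  | succ j => exact not_lt.1 (Nat.find_min hex (h ▸ j.lt_succ_self))

theorem tendsto_zero_of_norm_le_of_mem_Ico {E : Type*} [SeminormedAddCommGroup E] {f : ℕ → E}
    {t : ℕ → ℕ} (ht : StrictMono t) {g : ℕ → ℝ} (hg : Tendsto g atTop (𝓝 0))
    (hfg : ∀ k u, t k ≤ u → u < t (k + 1) → ‖f u‖ ≤ g k) : Tendsto f atTop (𝓝 0) := by
  refine Metric.tendsto_atTop.2 fun ε hε => ?_
  obtain ⟨K, hK⟩ := eventually_atTop.1 (hg.eventually (gt_mem_nhds hε))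
  refine ⟨t K, fun u hu => ?_⟩
  obtain ⟨k, hKk, hku, huk⟩ := ht.exists_le_lt_succ hu
  rw [dist_zero_right]
  exact (hfg k u hku huk).trans_lt (hK k hKk)

theorem tendsto_zero_of_segment_bound {E : Type*} [SeminormedAddCommGroup E] {f : ℕ → E}
    {t : ℕ → ℕ} (ht : StrictMono t) {K : ℝ} (hK : 0 ≤ K)
    (hf : ∀ k u, t k ≤ u → u ≤ t (k + 1) → ‖f u‖ ≤ K * ‖f (t k)‖)
    (heven : Tendsto (fun j => f (t (2 * j))) atTop (𝓝 0)) : Tendsto f atTop (𝓝 0) := by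
  refine tendsto_zero_of_norm_le_of_mem_Ico (t := fun j => t (2 * j))
    (ht.comp (strictMono_mul_left_of_pos two_pos)) (g := fun j => K * (1 + K) * ‖f (t (2 * j))‖)
    (by simpa using heven.norm.const_mul (K * (1 + K))) fun j u hu₁ hu₂ => ?_
  have hy := norm_nonneg (f (t (2 * j)))
  rcases le_total u (t (2 * j + 1)) with hu | hu
  · nlinarith [hf (2 * j) u hu₁ hu, mul_nonneg (mul_nonneg hK hK) hy]
  · have h₁ := hf (2 * j) _ (ht.monotone (by omega)) le_rfl
    have h₂ := hf (2 * j + 1) u hu (by rw [show 2 * j + 1 + 1 = 2 * (j + 1) by ring]; exact hu₂.le)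
    nlinarith [mul_le_mul_of_nonneg_left h₁ hK]

section LinftyOpNorm

attribute [local instance] Matrix.linftyOpNormedRing Matrix.linftyOpNormedAlgebra

variable {n : Type*} [Fintype n] [DecidableEq n]

theorem Matrix.linfty_opNorm_map_ofReal (M : Matrix n n ℝ) :
    ‖M.map ((↑) : ℝ → ℂ)‖ = ‖M‖ := by
  simp [linfty_opNorm_def]

theorem Matrix.norm_conj_diagonal_pow_le {𝕜 : Type*} [NormedField 𝕜] (V : Matrix n n 𝕜)
    {d : n → 𝕜} (hd : ∀ i, ‖d i‖ ≤ 1) (p : ℕ) : ‖V * diagonal d ^ p * V⁻¹‖ ≤ ‖V‖ * ‖V⁻¹‖ := by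
  have hD : ‖diagonal d ^ p‖ ≤ 1 := by
    rw [diagonal_pow, linfty_opNorm_diagonal, pi_norm_le_iff_of_nonneg zero_le_one]
    exact fun i => by simpa using pow_le_one₀ (norm_nonneg _) (hd i)
  calc ‖V * diagonal d ^ p * V⁻¹‖ ≤ ‖V‖ * ‖diagonal d ^ p‖ * ‖V⁻¹‖ :=
        (norm_mul_le _ _).trans (mul_le_mul_of_nonneg_right (norm_mul_le _ _) (norm_nonneg _))
    _ ≤ ‖V‖ * ‖V⁻¹‖ := by
        gcongr
        exact mul_le_of_le_one_right (norm_nonneg _) hD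

theorem tendsto_zero_of_le_smul_mulVec {P : Matrix n n ℝ} (hP : ∀ i j, 0 ≤ P i j) {c : ℝ}
    (hc : 0 ≤ c) (hcP : c * (spectralRadius ℂ (P.map ((↑) : ℝ → ℂ))).toReal < 1)
    {a : ℕ → n → ℝ} (ha₀ : ∀ j, 0 ≤ a j) (ha : ∀ j, a (j + 1) ≤ c • (P *ᵥ a j)) :
    Tendsto a atTop (𝓝 0) := by
  set β := (spectralRadius ℂ (P.map ((↑) : ℝ → ℂ))).toReal
  obtain ⟨r, hcr, hβr⟩ : ∃ r, c * r < 1 ∧ β < r :=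
    ((((continuous_const_mul c).tendsto β).eventually_lt_const hcP).filter_mono
      nhdsWithin_le_nhds |>.and (self_mem_nhdsWithin : Set.Ioi β ∈ 𝓝[>] β)).exists
  have hr : 0 < r := ENNReal.toReal_nonneg.trans_lt hβr
  have hbound : ∀ᶠ j in atTop, ‖a j‖ ≤ (c * r) ^ j * ‖a 0‖ := by
    filter_upwards [eventually_norm_pow_le_of_spectralRadius_lt _ hβr] with j hj
    have hpow : P.map ((↑) : ℝ → ℂ) ^ j = (P ^ j).map (↑) :=
      (map_pow Complex.ofRealHom.mapMatrix P j).symm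
    rw [hpow, linfty_opNorm_map_ofReal] at hj
    calc ‖a j‖ ≤ ‖c ^ j • (P ^ j *ᵥ a 0)‖ :=
          Pi.norm_le_norm_of_nonneg_of_le (ha₀ j) (le_pow_smul_pow_mulVec hP hc ha j)
      _ ≤ c ^ j * (‖P ^ j‖ * ‖a 0‖) := by
          rw [norm_smul, Real.norm_of_nonneg (by positivity)]
          gcongr
          exact linfty_opNorm_mulVec _ _
      _ ≤ (c * r) ^ j * ‖a 0‖ := by
          rw [mul_pow, mul_assoc]
          gcongr
  exact squeeze_zero_norm' hbound
    (by simpa using (tendsto_pow_atTop_nhds_zero_of_lt_one (by positivity) hcr).mul_const ‖a 0‖)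

theorem tendsto_zero_of_two_mode_recursion {V₀ V₁ : Matrix n n ℂ} (hV₀ : IsUnit V₀)
    {d₀ d₁ : n → ℂ} {ρ₀ ρ₁ : ℝ} (hρ₀ : 0 ≤ ρ₀) (hρ₁ : 0 ≤ ρ₁) (hd₀ : ∀ i, ‖d₀ i‖ ≤ ρ₀)
    (hd₁ : ∀ i, ‖d₁ i‖ ≤ ρ₁) {p q : ℕ → ℕ} {c : ℝ} (hc : ∀ j, ρ₁ ^ q j * ρ₀ ^ p j ≤ c)
    (hgap : c * (spectralRadius ℂ (absMatrix (V₀⁻¹ * V₁) * absMatrix (V₁⁻¹ * V₀))).toReal < 1)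
    {y : ℕ → n → ℂ} (hy : ∀ j, y (j + 1) =
      (V₁ * diagonal d₁ ^ q j * V₁⁻¹) *ᵥ ((V₀ * diagonal d₀ ^ p j * V₀⁻¹) *ᵥ y j)) :
    Tendsto y atTop (𝓝 0) := by
  set P := (V₀⁻¹ * V₁).map (‖·‖) * (V₁⁻¹ * V₀).map (‖·‖)
  have hP : ∀ i j, 0 ≤ P i j := fun i j =>
    Finset.sum_nonneg fun k _ =>
      mul_nonneg (norm_nonneg ((V₀⁻¹ * V₁) i k)) (norm_nonneg ((V₁⁻¹ * V₀) k j))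
  have hmodal : Tendsto (fun j => (‖(V₀⁻¹ *ᵥ y j) ·‖)) atTop (𝓝 0) := by
    refine tendsto_zero_of_le_smul_mulVec hP ((by positivity : (0 : ℝ) ≤ _).trans (hc 0))
      (by rwa [absMatrix_mul_absMatrix] at hgap) (fun j i => norm_nonneg _) fun j => ?_
    rw [hy]
    exact (norm_inv_mulVec_two_mode_le V₀ V₁ hρ₁ hd₀ hd₁ _ _ _).trans <|
      smul_le_smul_of_nonneg_right (hc j) (mulVec_nonneg_of_nonneg hP fun i => norm_nonneg _)
  refine squeeze_zero_norm (fun j => ?_) (by simpa using hmodal.norm.const_mul ‖V₀‖)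
  calc ‖y j‖ = ‖V₀ *ᵥ (V₀⁻¹ *ᵥ y j)‖ := by
        rw [mulVec_mulVec, mul_nonsing_inv _ ((isUnit_iff_isUnit_det V₀).1 hV₀), one_mulVec]
    _ ≤ ‖V₀‖ * ‖(‖(V₀⁻¹ *ᵥ y j) ·‖)‖ := by
        rw [Pi.norm_norm_apply]
        exact linfty_opNorm_mulVec _ _

theorem tendsto_zero_of_dwell_time {V : Fin 2 → Matrix n n ℂ} (hV : ∀ c, IsUnit (V c))
    {d : Fin 2 → n → ℂ} {ρ : Fin 2 → ℝ} (hρ₀ : ∀ c, 0 < ρ c) (hρ₁ : ∀ c, ρ c ≤ 1)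
    (hd : ∀ c i, ‖d c i‖ ≤ ρ c) {τ : ℝ}
    (hgap : ∀ c c', c ≠ c' → (ρ c * ρ c') ^ τ *
      (spectralRadius ℂ (absMatrix ((V c)⁻¹ * V c') * absMatrix ((V c')⁻¹ * V c))).toReal < 1)
    {t : ℕ → ℕ} (ht : StrictMono t) (hdwell : ∀ k, τ ≤ ((t (k + 1) - t k : ℕ) : ℝ))
    {b : ℕ → Fin 2} (hb : ∀ k, b k ≠ b (k + 1)) {z : ℕ → n → ℂ}
    (hz : ∀ k u, t k ≤ u → u < t (k + 1) →
      z (u + 1) = (V (b k) * diagonal (d (b k)) * (V (b k))⁻¹) *ᵥ z u) :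
    Tendsto z atTop (𝓝 0) := by
  have hseg : ∀ k u, t k ≤ u → u ≤ t (k + 1) →
      z u = (V (b k) * diagonal (d (b k)) ^ (u - t k) * (V (b k))⁻¹) *ᵥ z (t k) := by
    intro k u hu₁ hu₂
    rw [← Matrix.conj_pow (hV _), ← eq_pow_mulVec_of_forall_step _ fun v hv₁ hv₂ =>
      hz k v (by omega) (by omega), Nat.add_sub_cancel' hu₁]
  have hstep : ∀ k, z (t (k + 1)) =
      (V (b k) * diagonal (d (b k)) ^ (t (k + 1) - t k) * (V (b k))⁻¹) *ᵥ z (t k) :=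
    fun k => hseg k _ (ht k.lt_succ_self).le le_rfl
  have hb₀ : ∀ j, b (2 * j) = b 0 := fun j => Fin.two_eq_of_forall_ne_succ hb j 0
  have hb₁ : ∀ j, b (2 * j + 1) = b 1 := fun j => Fin.two_eq_of_forall_ne_succ hb j 1
  have heven : Tendsto (fun j => z (t (2 * j))) atTop (𝓝 0) := by
    refine tendsto_zero_of_two_mode_recursion (V₁ := V (b 1)) (hV (b 0)) (hρ₀ _).le (hρ₀ _).le
      (hd (b 0)) (hd (b 1)) (p := fun j => t (2 * j + 1) - t (2 * j))
      (q := fun j => t (2 * j + 1 + 1) - t (2 * j + 1)) (fun j => ?_) (hgap _ _ (hb 0)) fun j => ?_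
    · exact Real.pow_mul_pow_le_mul_rpow (hρ₀ _) (hρ₁ _) (hρ₀ _) (hρ₁ _) (hdwell _) (hdwell _)
    · rw [show 2 * (j + 1) = 2 * j + 1 + 1 by ring, hstep, hstep, hb₀, hb₁]
  set K := ∑ c, ‖V c‖ * ‖(V c)⁻¹‖
  have hK : 0 ≤ K := Finset.sum_nonneg fun c _ => mul_nonneg (norm_nonneg _) (norm_nonneg _)
  refine tendsto_zero_of_segment_bound ht hK (fun k u hu₁ hu₂ => ?_) heven
  rw [hseg k u hu₁ hu₂]
  refine (linfty_opNorm_mulVec _ _).trans (mul_le_mul_of_nonneg_right ?_ (norm_nonneg _))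
  exact (norm_conj_diagonal_pow_le _ (fun i => (hd _ i).trans (hρ₁ _)) _).trans
    (Finset.single_le_sum (f := fun c => ‖V c‖ * ‖(V c)⁻¹‖)
      (fun c _ => mul_nonneg (norm_nonneg _) (norm_nonneg _)) (Finset.mem_univ _))

end LinftyOpNorm

theorem bimodal_min_dwell_time_scaled_general
    {N : ℕ} (A : Fin 2 → Matrix (Fin N) (Fin N) ℝ)
    (V D : Fin 2 → Matrix (Fin N) (Fin N) ℂ) (ρ : Fin 2 → ℝ)
    (hVunit : ∀ i, IsUnit (V i))
    (hDdiag : ∀ i, (D i).IsDiag)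
    (hdecomp : ∀ i, (A i).map Complex.ofReal = V i * D i * (V i)⁻¹)
    (hρ : ∀ i, ρ i = ⨆ j, ‖D i j j‖)
    (hρpos : ∀ i, 0 < ρ i) (hSchur : ∀ i, ρ i < 1)
    (τ : ℝ)
    (hτ : Real.log (spectralRadius ℂ
            (absMatrix ((V 1)⁻¹ * V 0) * absMatrix ((V 0)⁻¹ * V 1))).toReal /
          (-Real.log (ρ 0 * ρ 1)) < τ)
    (s : ℕ → Fin 2) (t : ℕ → ℕ)
    (htmono : StrictMono t)
    (hdwell : ∀ k, τ ≤ ((t (k + 1) - t k : ℕ) : ℝ))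
    (halt : ∀ k, s (k + 1) ≠ s (k + 2))
    (σ : ℕ → Fin 2)
    (hσ : ∀ k u, t k ≤ u → u < t (k + 1) → σ u = s (k + 1))
    (x : ℕ → Fin N → ℝ)
    (hx : ∀ u, x (u + 1) = (A (σ u)).mulVec (x u)) :
    Filter.Tendsto x Filter.atTop (nhds 0) := by
  have hd : ∀ c i, ‖(D c).diag i‖ ≤ ρ c := fun c i =>
    (hρ c).symm ▸ le_ciSup (f := fun j => ‖D c j j‖) (Finite.bddAbove_range _) i
  have hgap : ∀ c c', c ≠ c' → (ρ c * ρ c') ^ τ *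
      (spectralRadius ℂ (absMatrix ((V c)⁻¹ * V c') * absMatrix ((V c')⁻¹ * V c))).toReal < 1 := by
    have h := Real.rpow_mul_lt_one_of_log_div_lt ENNReal.toReal_nonneg
      (mul_pos (hρpos 0) (hρpos 1)) (mul_lt_one_of_nonneg_of_lt_one_left (hρpos 0).le (hSchur 0)
        (hSchur 1).le) hτ
    intro c c' hcc'
    obtain ⟨rfl, rfl⟩ | ⟨rfl, rfl⟩ : c = 0 ∧ c' = 1 ∨ c = 1 ∧ c' = 0 := by omega
    · rwa [spectralRadius_mul_comm]
    · rwa [mul_comm (ρ 1)]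
  have hz := tendsto_zero_of_dwell_time (z := fun u i => (x u i : ℂ)) hVunit hρpos
    (fun c => (hSchur c).le) hd hgap htmono hdwell (b := fun k => s (k + 1)) halt
    fun k u hu₁ hu₂ => by
      rw [(hDdiag _).diagonal_diag, ← hdecomp, ← hσ k u hu₁ hu₂, hx]
      ext i
      exact RingHom.map_mulVec Complex.ofRealHom _ _ i
  exact tendsto_pi_nhds.2 fun i => by
    simpa [Function.comp_def] using (Complex.continuous_re.tendsto 0).comp (tendsto_pi_nhds.1 hz i)

/-- Bimodal minimum dwell time corollary (via Bauer's theorem).  For a bimodal switched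
system with diagonalizable Schur stable matrices `Aᵢ = Vᵢ Dᵢ Vᵢ⁻¹` and spectral radii
`ρ₁, ρ₂ ∈ (0,1)`: if `τ > ln ρ(|V₂⁻¹V₁| |V₁⁻¹V₂|) / (-ln (ρ₁ρ₂))`, then every solution
with alternating switching and all switching intervals at least `τ` converges to zero. -/
theorem bimodal_min_dwell_time_scaled
    {N : ℕ} (A : Fin 2 → Matrix (Fin N) (Fin N) ℝ)
    (V D : Fin 2 → Matrix (Fin N) (Fin N) ℂ) (ρ : Fin 2 → ℝ)
    (hVunit : ∀ i, IsUnit (V i))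
    (hDdiag : ∀ i, (D i).IsDiag)
    (hdecomp : ∀ i, (A i).map Complex.ofReal = V i * D i * (V i)⁻¹)
    (hρ : ∀ i, ρ i = ⨆ j, ‖D i j j‖)
    (hρpos : ∀ i, 0 < ρ i) (hSchur : ∀ i, ρ i < 1)
    (τ : ℝ)
    (hτ : Real.log (spectralRadius ℂ
            (absMatrix ((V 1)⁻¹ * V 0) * absMatrix ((V 0)⁻¹ * V 1))).toReal /
          (-Real.log (ρ 0 * ρ 1)) < τ)
    (s : ℕ → Fin 2) (t : ℕ → ℕ)
    (ht0 : t 0 = 0) (htmono : StrictMono t)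
    (hdwell : ∀ k, τ ≤ ((t (k + 1) - t k : ℕ) : ℝ))
    (halt : ∀ k, s (k + 1) ≠ s (k + 2))
    (σ : ℕ → Fin 2)
    (hσ : ∀ k u, t k ≤ u → u < t (k + 1) → σ u = s (k + 1))
    (x : ℕ → Fin N → ℝ)
    (hx : ∀ u, x (u + 1) = (A (σ u)).mulVec (x u)) :
    Filter.Tendsto x Filter.atTop (nhds 0) :=
  bimodal_min_dwell_time_scaled_general A V D ρ hVunit hDdiag hdecomp hρ hρpos hSchur τ hτ s t
    htmono hdwell halt σ hσ x hx
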